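/- arXiv:1103.4876 — 5 statements merged into one kernel-verified Lean document; each statement's English description precedes it below -/
import Mathlib

section
/- Let q ∈ ℝ and x : ℝ → ℝ³ smooth with x(t) ≠ 0, satisfying ẍ = q (ẋ × x)/|x|³. With J = x × ẋ − q x/|x| (which is constant), one has J · x(t)/|x(t)| = −q for all t; consequently, if J ≠ 0, the angle between x(t) and the fixed vector J is constant, i.e. the trajectory lies on a cone of half-opening angle arccos(−q/|J|) with axis J. -/
noncomputable def cross3 (u v : EuclideanSpace ℝ (Fin 3)) : EuclideanSpace ℝ (Fin 3) :=
  (WithLp.equiv 2 (Fin 3 → ℝ)).symm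
    ![u 1 * v 2 - u 2 * v 1, u 2 * v 0 - u 0 * v 2, u 0 * v 1 - u 1 * v 0]

/-- Poincaré angular momentum of the monopole problem. -/
noncomputable def Jmonopole (q : ℝ) (x : ℝ → EuclideanSpace ℝ (Fin 3)) (t : ℝ) :
    EuclideanSpace ℝ (Fin 3) :=
  cross3 (x t) (deriv x t) - (q / ‖x t‖) • x t

lemma cross3_apply0 (u v : EuclideanSpace ℝ (Fin 3)) :
    cross3 u v 0 = u 1 * v 2 - u 2 * v 1 := rfl
lemma cross3_apply1 (u v : EuclideanSpace ℝ (Fin 3)) :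
    cross3 u v 1 = u 2 * v 0 - u 0 * v 2 := rfl
lemma cross3_apply2 (u v : EuclideanSpace ℝ (Fin 3)) :
    cross3 u v 2 = u 0 * v 1 - u 1 * v 0 := rfl

/-- For a charged particle in a Dirac monopole field, `J` is constant,
`J · x/|x| = −q`, and (if `J ≠ 0`) the trajectory lies on a cone of
half-opening angle `arccos(−q/|J|)` with axis `J`. -/
theorem monopole_cone (q : ℝ) (x : ℝ → EuclideanSpace ℝ (Fin 3))
    (hx : ContDiff ℝ (⊤ : ℕ∞) x) (hne : ∀ t, x t ≠ 0)
    (heq : ∀ t, deriv (deriv x) t = (q / ‖x t‖ ^ 3) • cross3 (deriv x t) (x t)) :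
    (∀ t s : ℝ, Jmonopole q x t = Jmonopole q x s) ∧
    (∀ t : ℝ, (inner ℝ (Jmonopole q x t) (x t) : ℝ) / ‖x t‖ = -q) ∧
    (Jmonopole q x 0 ≠ 0 →
      ∀ t : ℝ, InnerProductGeometry.angle (Jmonopole q x 0) (x t)
        = Real.arccos (-q / ‖Jmonopole q x 0‖)) := by
  have hxd : Differentiable ℝ x := hx.differentiable (by simp)
  have hvd : Differentiable ℝ (deriv x) := by
    have h : ContDiff ℝ ((⊤ : ℕ∞) : WithTop ℕ∞) x := hx.of_le (by simp)
    exact (contDiff_infty_iff_deriv.mp h).2.differentiable (by simp)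
  have hrne : ∀ t, ‖x t‖ ≠ 0 := fun t => norm_ne_zero_iff.mpr (hne t)
  have hnorm_eq : ∀ t, ‖x t‖ = Real.sqrt (x t 0 ^ 2 + x t 1 ^ 2 + x t 2 ^ 2) := by
    intro t; simp [EuclideanSpace.norm_eq, Fin.sum_univ_three, sq_abs]
  have hr2 : ∀ t, ‖x t‖ ^ 2 = x t 0 ^ 2 + x t 1 ^ 2 + x t 2 ^ 2 := by
    intro t
    rw [hnorm_eq t, Real.sq_sqrt]
    positivity
  have hX : ∀ (j : Fin 3) t, HasDerivAt (fun s => x s j) (deriv x t j) t := by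
    intro j t
    exact (EuclideanSpace.proj j).hasFDerivAt.comp_hasDerivAt t (hxd t).hasDerivAt
  have hV : ∀ (j : Fin 3) t, HasDerivAt (fun s => deriv x s j)
      ((q / ‖x t‖ ^ 3) * cross3 (deriv x t) (x t) j) t := by
    intro j t
    have h := (EuclideanSpace.proj j).hasFDerivAt.comp_hasDerivAt t (hvd t).hasDerivAt
    rw [heq t] at h
    exact h
  have hr : ∀ t, HasDerivAt (fun s => ‖x s‖)
      ((x t 0 * deriv x t 0 + x t 1 * deriv x t 1 + x t 2 * deriv x t 2) / ‖x t‖) t := by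
    intro t
    have hp : HasDerivAt (fun s => x s 0 ^ 2 + x s 1 ^ 2 + x s 2 ^ 2)
        (2 * (x t 0 * deriv x t 0 + x t 1 * deriv x t 1 + x t 2 * deriv x t 2)) t := by
      have := (((hX 0 t).pow 2).add ((hX 1 t).pow 2)).add ((hX 2 t).pow 2)
      exact this.congr_deriv (by ring)
    have hpne : x t 0 ^ 2 + x t 1 ^ 2 + x t 2 ^ 2 ≠ 0 := by
      rw [← hr2 t]; exact pow_ne_zero 2 (hrne t)
    have := (Real.hasDerivAt_sqrt hpne).comp t hp
    simp only [Function.comp_def] at this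
    have heqf : (fun s => Real.sqrt (x s 0 ^ 2 + x s 1 ^ 2 + x s 2 ^ 2)) = fun s => ‖x s‖ := by
      funext s; rw [hnorm_eq s]
    rw [heqf] at this
    refine this.congr_deriv ?_
    rw [← hnorm_eq t]
    field_simp
  have hJd : ∀ (i : Fin 3) t, HasDerivAt (fun s => Jmonopole q x s i) 0 t := by
    intro i t
    fin_cases i
    · have hD := (((hX 1 t).mul (hV 2 t)).sub ((hX 2 t).mul (hV 1 t))).sub
        (((hasDerivAt_const t q).div (hr t) (hrne t)).mul (hX 0 t))
      have hfun : (fun s => (x s 1 * deriv x s 2 - x s 2 * deriv x s 1) -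
          q / ‖x s‖ * x s 0) = fun s => Jmonopole q x s 0 := by
        funext s
        show _ = cross3 (x s) (deriv x s) 0 - (q / ‖x s‖) * x s 0
        rw [cross3_apply0]
      refine HasDerivAt.congr_deriv (f := fun s => Jmonopole q x s 0) hD ?_
      symm
      rw [cross3_apply1, cross3_apply2]
      simp only [Pi.div_apply]
      have h2 := hr2 t
      have hrn := hrne t
      field_simp
      linear_combination (q * deriv x t 0) * h2
    · have hD := (((hX 2 t).mul (hV 0 t)).sub ((hX 0 t).mul (hV 2 t))).sub
        (((hasDerivAt_const t q).div (hr t) (hrne t)).mul (hX 1 t))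
      have hfun : (fun s => (x s 2 * deriv x s 0 - x s 0 * deriv x s 2) -
          q / ‖x s‖ * x s 1) = fun s => Jmonopole q x s 1 := by
        funext s
        show _ = cross3 (x s) (deriv x s) 1 - (q / ‖x s‖) * x s 1
        rw [cross3_apply1]
      refine HasDerivAt.congr_deriv (f := fun s => Jmonopole q x s 1) hD ?_
      symm
      rw [cross3_apply0, cross3_apply2]
      simp only [Pi.div_apply]
      have h2 := hr2 t
      have hrn := hrne t
      field_simp
      linear_combination (q * deriv x t 1) * h2
    · have hD := (((hX 0 t).mul (hV 1 t)).sub ((hX 1 t).mul (hV 0 t))).sub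
        (((hasDerivAt_const t q).div (hr t) (hrne t)).mul (hX 2 t))
      have hfun : (fun s => (x s 0 * deriv x s 1 - x s 1 * deriv x s 0) -
          q / ‖x s‖ * x s 2) = fun s => Jmonopole q x s 2 := by
        funext s
        show _ = cross3 (x s) (deriv x s) 2 - (q / ‖x s‖) * x s 2
        rw [cross3_apply2]
      refine HasDerivAt.congr_deriv (f := fun s => Jmonopole q x s 2) hD ?_
      symm
      rw [cross3_apply0, cross3_apply1]
      simp only [Pi.div_apply]
      have h2 := hr2 t
      have hrn := hrne t
      field_simp
      linear_combination (q * deriv x t 2) * h2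
  have hconst : ∀ t s : ℝ, Jmonopole q x t = Jmonopole q x s := by
    intro t s
    have : ∀ i : Fin 3, Jmonopole q x t i = Jmonopole q x s i := by
      intro i
      exact is_const_of_deriv_eq_zero (fun u => (hJd i u).differentiableAt)
        (fun u => (hJd i u).deriv) t s
    ext i
    exact this i
  have hinner : ∀ t : ℝ, (inner ℝ (Jmonopole q x t) (x t) : ℝ) = -q * ‖x t‖ := by
    intro t
    have : (inner ℝ (Jmonopole q x t) (x t) : ℝ) =
        (Jmonopole q x t 0) * x t 0 + (Jmonopole q x t 1) * x t 1 +
        (Jmonopole q x t 2) * x t 2 := by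
      simp [PiLp.inner_apply, Fin.sum_univ_three, RCLike.inner_apply]; ring
    rw [this]
    have hJ0 : Jmonopole q x t 0 = (x t 1 * deriv x t 2 - x t 2 * deriv x t 1)
        - q / ‖x t‖ * x t 0 := rfl
    have hJ1 : Jmonopole q x t 1 = (x t 2 * deriv x t 0 - x t 0 * deriv x t 2)
        - q / ‖x t‖ * x t 1 := rfl
    have hJ2 : Jmonopole q x t 2 = (x t 0 * deriv x t 1 - x t 1 * deriv x t 0)
        - q / ‖x t‖ * x t 2 := rfl
    rw [hJ0, hJ1, hJ2]
    have h2 := hr2 t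
    have hrn := hrne t
    field_simp
    linear_combination q * h2
  refine ⟨hconst, fun t => ?_, fun hJne t => ?_⟩
  · rw [hinner t, neg_mul, neg_div, mul_div_cancel_right₀ _ (hrne t)]
  · rw [InnerProductGeometry.angle]
    congr 1
    rw [hconst 0 t, hinner t, hconst t 0]
    rw [mul_div_mul_right _ _ (hrne t)]
end

section
/- In the MICZ system (ẍ = q (ẋ × x)/|x|³ − ∇V with V = q²/(2r²) + β/r + γ, q ≠ 0), define the conserved vectors J = x × ẋ − q x/|x| and K = ẋ × J + β x/|x|, and set N = (β/q) J + K. Then N · x(t) = |J|² − q² for all t; in particular the trajectory lies in a fixed affine plane orthogonal to N (when N ≠ 0). -/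
/-- Runge–Lenz vector of the MICZ system. -/
noncomputable def Kmicz (q β : ℝ) (x : ℝ → EuclideanSpace ℝ (Fin 3)) (t : ℝ) :
    EuclideanSpace ℝ (Fin 3) :=
  cross3 (deriv x t) (Jmonopole q x t) + (β / ‖x t‖) • x t

lemma cross3_inner_self (u v : EuclideanSpace ℝ (Fin 3)) :
    (inner ℝ (cross3 u v) u : ℝ) = 0 := by
  simp only [cross3, PiLp.inner_apply, Fin.sum_univ_three, WithLp.equiv_symm_apply, PiLp.toLp_apply,
    Matrix.cons_val_zero, Matrix.cons_val_one, Matrix.head_cons, Matrix.cons_val_two,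
    Matrix.tail_cons, RCLike.inner_apply, conj_trivial]
  ring

lemma cross3_cyclic (u v w : EuclideanSpace ℝ (Fin 3)) :
    (inner ℝ (cross3 u v) w : ℝ) = inner ℝ (cross3 w u) v := by
  simp only [cross3, PiLp.inner_apply, Fin.sum_univ_three, WithLp.equiv_symm_apply, PiLp.toLp_apply,
    Matrix.cons_val_zero, Matrix.cons_val_one, Matrix.head_cons, Matrix.cons_val_two,
    Matrix.tail_cons, RCLike.inner_apply, conj_trivial]
  ring

/-- In the MICZ system, the conserved vector `N = (β/q) J + K` satisfies
`N · x(t) = |J|² − q²` for all `t`: the trajectory lies in a fixed affine plane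
orthogonal to `N`. -/
theorem micz_plane (q β γ : ℝ) (hq : q ≠ 0)
    (x : ℝ → EuclideanSpace ℝ (Fin 3))
    (hx : ContDiff ℝ (⊤ : ℕ∞) x) (hne : ∀ t, x t ≠ 0)
    (heq : ∀ t, deriv (deriv x) t =
      (q / ‖x t‖ ^ 3) • cross3 (deriv x t) (x t)
        + (q ^ 2 / ‖x t‖ ^ 4 + β / ‖x t‖ ^ 3) • x t) :
    ∀ t : ℝ,
      (inner ℝ ((β / q) • Jmonopole q x t + Kmicz q β x t) (x t) : ℝ)
        = ‖Jmonopole q x t‖ ^ 2 - q ^ 2 := by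
  intro t
  set a := x t with ha
  set v := deriv x t with hv
  set c := cross3 a v with hc
  set J := Jmonopole q x t with hJdef
  have hr : ‖a‖ ≠ 0 := norm_ne_zero_iff.mpr (hne t)
  have hJ : J = c - (q / ‖a‖) • a := rfl
  have haa : (inner ℝ a a : ℝ) = ‖a‖ ^ 2 := real_inner_self_eq_norm_sq a
  have h1 : (inner ℝ c a : ℝ) = 0 := cross3_inner_self a v
  have h1' : (inner ℝ a c : ℝ) = 0 := by rw [real_inner_comm]; exact h1
  have hJa : (inner ℝ J a : ℝ) = -(q * ‖a‖) := by
    rw [hJ, inner_sub_left, real_inner_smul_left, h1, haa]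
    field_simp
    ring
  have hcJ : (inner ℝ c J : ℝ) = ‖c‖ ^ 2 := by
    rw [hJ, inner_sub_right, real_inner_smul_right, h1, real_inner_self_eq_norm_sq]
    ring
  have htriple : (inner ℝ (cross3 v J) a : ℝ) = ‖c‖ ^ 2 := by
    rw [cross3_cyclic v J a, ← hc]
    exact hcJ
  have hJJ : ‖J‖ ^ 2 = ‖c‖ ^ 2 + q ^ 2 := by
    rw [← real_inner_self_eq_norm_sq J, hJ]
    rw [inner_sub_left, inner_sub_right, inner_sub_right, real_inner_smul_left,
      real_inner_smul_left, real_inner_smul_right, real_inner_smul_right,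
      h1, h1', haa, real_inner_self_eq_norm_sq]
    field_simp
    ring
  have hK : Kmicz q β x t = cross3 v J + (β / ‖a‖) • a := rfl
  rw [hK, inner_add_left, inner_add_left, real_inner_smul_left, real_inner_smul_left,
    hJa, htriple, haa, hJJ]
  field_simp
  ring
end

section
/- Let N ≥ 3, let a₁, …, a_N ∈ ℝ³ be pairwise distinct points not all lying on one line through the origin together, and let m₁, …, m_N > 0. Then there is no nonzero vector n ∈ ℝ³ such that Σ_{i=1}^{N} m_i ((n·x) a_i − (n·a_i) x)/|x − a_i|³ = 0 holds for all x ∈ ℝ³ ∖ {a₁, …, a_N}. Equivalently, the multi-center conformal factor f(x) = f₀ + Σ_i m_i/|x − a_i| satisfies n × (x × ∇f(x)) = 0 identically only if N ≤ 2. -/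
open Filter Topology

private lemma exists_perp (n : EuclideanSpace ℝ (Fin 3)) (hn : n ≠ 0) :
    ∃ v : EuclideanSpace ℝ (Fin 3), v ≠ 0 ∧ (inner ℝ n v : ℝ) = 0 := by
  by_contra hcon
  push_neg at hcon
  have hbot : (Submodule.span ℝ {n})ᗮ = ⊥ := by
    rw [Submodule.eq_bot_iff]
    intro v hvmem
    by_contra hv0
    exact hcon v hv0 ((Submodule.mem_orthogonal _ v).mp hvmem n
      (Submodule.mem_span_singleton_self n))
  rw [Submodule.orthogonal_eq_bot_iff] at hbot
  have h1 : Module.finrank ℝ (Submodule.span ℝ {n}) = 1 := finrank_span_singleton hn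
  rw [hbot, finrank_top, finrank_euclideanSpace] at h1
  simp at h1

/-- For `N ≥ 3` pairwise distinct centers (not all on one line through the origin)
with positive NUT charges, the multi-center condition
`Σ_i m_i ((n·x) a_i − (n·a_i) x)/|x − a_i|³ = 0` has no nonzero solution `n`:
no Kepler-type symmetry exists for more than two centers. -/
theorem no_runge_lenz_multicenter (N : ℕ) (hN : 3 ≤ N)
    (a : Fin N → EuclideanSpace ℝ (Fin 3)) (ha : Function.Injective a)
    (hline : ¬ ∃ u : EuclideanSpace ℝ (Fin 3), ∀ i, ∃ c : ℝ, a i = c • u)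
    (m : Fin N → ℝ) (hm : ∀ i, 0 < m i) :
    ¬ ∃ n : EuclideanSpace ℝ (Fin 3), n ≠ 0 ∧
      ∀ x : EuclideanSpace ℝ (Fin 3), (∀ i, x ≠ a i) →
        ∑ i : Fin N, (m i / ‖x - a i‖ ^ 3) •
          ((inner ℝ n x : ℝ) • a i - (inner ℝ n (a i) : ℝ) • x) = 0 := by
  rintro ⟨n, hn, H⟩
  have key : ∀ (j : Fin N) (v : EuclideanSpace ℝ (Fin 3)), v ≠ 0 →
      (inner ℝ n v : ℝ) • a j = (inner ℝ n (a j) : ℝ) • v := by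
    intro j v hv
    set c : ℝ := m j / ‖v‖ ^ 3 with hc
    have hc0 : 0 < c := div_pos (hm j) (pow_pos (norm_pos_iff.mpr hv) 3)
    set w : EuclideanSpace ℝ (Fin 3) :=
      (inner ℝ n v : ℝ) • a j - (inner ℝ n (a j) : ℝ) • v with hw
    set G : ℝ → EuclideanSpace ℝ (Fin 3) := fun t =>
      ∑ i ∈ Finset.univ.erase j, ((t ^ 2 * m i) / ‖(a j + t • v) - a i‖ ^ 3) •
        ((inner ℝ n (a j + t • v) : ℝ) • a i - (inner ℝ n (a i) : ℝ) • (a j + t • v)) with hG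
    -- eventually the point a j + t • v avoids all centers
    have hev : ∀ᶠ t in 𝓝[>] (0:ℝ), ∀ i, a j + t • v ≠ a i := by
      rw [Filter.eventually_all]
      intro i
      have hever : ∀ s : ℝ, ∀ᶠ t in 𝓝[>] (0:ℝ), t ≠ s := by
        intro s
        rcases eq_or_ne s 0 with rfl | hs
        · filter_upwards [self_mem_nhdsWithin] with t ht
          exact ne_of_gt ht
        · exact Filter.Eventually.filter_mono nhdsWithin_le_nhds (eventually_ne_nhds hs.symm)
      by_cases hex : ∃ s : ℝ, a j + s • v = a i
      · obtain ⟨s, hs⟩ := hex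
        filter_upwards [hever s] with t ht heq
        apply ht
        have h2 : (t - s) • v = 0 := by
          have h3 : a j + t • v = a j + s • v := heq.trans hs.symm
          have h4 : t • v = s • v := by
            have := congrArg (fun y => y - a j) h3
            simpa using this
          rw [sub_smul, h4, sub_self]
        rcases smul_eq_zero.mp h2 with h | h
        · linarith [sub_eq_zero.mp h]
        · exact absurd h hv
      · push_neg at hex
        exact Filter.Eventually.of_forall fun t => hex t
    -- eventually G t = -(c • w)
    have hGeq : ∀ᶠ t in 𝓝[>] (0:ℝ), G t = -(c • w) := by
      filter_upwards [hev, self_mem_nhdsWithin] with t hta htpos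
      have ht0 : (0:ℝ) < t := htpos
      have h0 := H (a j + t • v) hta
      have h1 : ∑ i : Fin N, ((t ^ 2 * m i) / ‖(a j + t • v) - a i‖ ^ 3) •
          ((inner ℝ n (a j + t • v) : ℝ) • a i - (inner ℝ n (a i) : ℝ) • (a j + t • v)) = 0 := by
        calc ∑ i : Fin N, ((t ^ 2 * m i) / ‖(a j + t • v) - a i‖ ^ 3) •
              ((inner ℝ n (a j + t • v) : ℝ) • a i - (inner ℝ n (a i) : ℝ) • (a j + t • v))
            = (t ^ 2) • ∑ i : Fin N, (m i / ‖(a j + t • v) - a i‖ ^ 3) •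
              ((inner ℝ n (a j + t • v) : ℝ) • a i - (inner ℝ n (a i) : ℝ) • (a j + t • v)) := by
              rw [Finset.smul_sum]
              refine Finset.sum_congr rfl fun i _ => ?_
              rw [smul_smul, mul_div_assoc]
          _ = 0 := by rw [h0, smul_zero]
      rw [← Finset.add_sum_erase _ _ (Finset.mem_univ j)] at h1
      have hterm : ((t ^ 2 * m j) / ‖(a j + t • v) - a j‖ ^ 3) •
          ((inner ℝ n (a j + t • v) : ℝ) • a j - (inner ℝ n (a j) : ℝ) • (a j + t • v))
          = c • w := by
        have h2 : (a j + t • v) - a j = t • v := by abel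
        have h3 : ‖t • v‖ ^ 3 = t ^ 3 * ‖v‖ ^ 3 := by
          rw [norm_smul, Real.norm_eq_abs, abs_of_pos ht0, mul_pow]
        have h4 : (inner ℝ n (a j + t • v) : ℝ) = inner ℝ n (a j) + t * inner ℝ n v := by
          rw [inner_add_right, real_inner_smul_right]
        have h5 : (inner ℝ n (a j + t • v) : ℝ) • a j - (inner ℝ n (a j) : ℝ) • (a j + t • v)
            = t • w := by
          rw [h4, hw]
          module
        rw [h2, h3, h5, smul_smul]
        congr 1
        rw [hc]
        have hvn : ‖v‖ ≠ 0 := norm_ne_zero_iff.mpr hv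
        field_simp
      rw [hterm] at h1
      have : G t = ∑ i ∈ Finset.univ.erase j, ((t ^ 2 * m i) / ‖(a j + t • v) - a i‖ ^ 3) •
        ((inner ℝ n (a j + t • v) : ℝ) • a i - (inner ℝ n (a i) : ℝ) • (a j + t • v)) := rfl
      rw [this]
      exact eq_neg_of_add_eq_zero_right h1
    -- G tends to 0
    have hG0 : Tendsto G (𝓝 (0:ℝ)) (𝓝 0) := by
      have hzero : (0 : EuclideanSpace ℝ (Fin 3)) =
          ∑ i ∈ Finset.univ.erase j, (0 : EuclideanSpace ℝ (Fin 3)) := by simp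
      rw [hG, hzero]
      apply tendsto_finset_sum
      intro i hi
      have hij : i ≠ j := Finset.ne_of_mem_erase hi
      have haij : a j - a i ≠ 0 := by
        rw [sub_ne_zero]
        exact fun h => hij (ha h).symm
      have hxc : Continuous (fun t : ℝ => a j + t • v) :=
        continuous_const.add (continuous_id.smul continuous_const)
      have hden : ‖(a j + (0:ℝ) • v) - a i‖ ^ 3 ≠ 0 := by
        have : (a j + (0:ℝ) • v) - a i = a j - a i := by simp
        rw [this]
        exact pow_ne_zero _ (norm_ne_zero_iff.mpr haij)
      have hnum : Tendsto (fun t : ℝ => t ^ 2 * m i) (𝓝 0) (𝓝 0) := by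
        have := ((continuous_pow 2).mul (continuous_const (y := m i))).tendsto 0
        simpa [Pi.mul_def] using this
      have hden' : Tendsto (fun t : ℝ => ‖(a j + t • v) - a i‖ ^ 3) (𝓝 0)
          (𝓝 (‖(a j + (0:ℝ) • v) - a i‖ ^ 3)) :=
        (((hxc.sub continuous_const).norm.pow 3).tendsto 0)
      have hscal : Tendsto (fun t : ℝ => (t ^ 2 * m i) / ‖(a j + t • v) - a i‖ ^ 3)
          (𝓝 0) (𝓝 0) := by
        have := hnum.div hden' hden
        simpa [Pi.div_def] using this
      have hvecc : Continuous (fun t : ℝ =>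
          (inner ℝ n (a j + t • v) : ℝ) • a i - (inner ℝ n (a i) : ℝ) • (a j + t • v)) :=
        by fun_prop
      have := hscal.smul (hvecc.tendsto 0)
      simpa using this
    have hlim2 : Tendsto G (𝓝[>] (0:ℝ)) (𝓝 (-(c • w))) :=
      Tendsto.congr' (by filter_upwards [hGeq] with t ht; exact ht.symm) tendsto_const_nhds
    have huniq : (0 : EuclideanSpace ℝ (Fin 3)) = -(c • w) :=
      tendsto_nhds_unique (hG0.mono_left nhdsWithin_le_nhds) hlim2
    have hw0 : w = 0 := by
      have hcw : c • w = 0 := by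
        rw [← neg_eq_zero]
        exact huniq.symm
      exact (smul_eq_zero.mp hcw).resolve_left (ne_of_gt hc0)
    rw [hw] at hw0
    exact sub_eq_zero.mp hw0
  obtain ⟨v, hv, hnv⟩ := exists_perp n hn
  have hzero : ∀ j, a j = 0 := by
    intro j
    have h1 := key j v hv
    rw [hnv, zero_smul] at h1
    have h2 : (inner ℝ n (a j) : ℝ) = 0 :=
      (smul_eq_zero.mp h1.symm).resolve_right hv
    have h3 := key j n hn
    rw [h2, zero_smul] at h3
    have h4 : (inner ℝ n n : ℝ) ≠ 0 := inner_self_ne_zero.mpr hn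
    exact (smul_eq_zero.mp h3).resolve_left h4
  have h01 : (⟨0, by omega⟩ : Fin N) = ⟨1, by omega⟩ :=
    ha ((hzero _).trans (hzero _).symm)
  simp at h01
end

section
/- Let θ, α ∈ ℝ and let (x, p) : ℝ → ℝ³ × (ℝ³ ∖ {0}) be a smooth solution of the non-commutative oscillator equations ẋ = θ (x × p)/|p|³ − (θ²/|p|⁴ + α/|p|³) p and ṗ = −x. Then each of the following is constant in t: (i) the Hamiltonian H = |x|²/2 + θ²/(2|p|²) + α/|p|; (ii) the angular momentum J = x × p − θ p/|p|; (iii) the Runge–Lenz vector K = x × J − α p/|p|. -/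
set_option maxHeartbeats 2000000

lemma comp_hasDerivAt {f : ℝ → EuclideanSpace ℝ (Fin 3)} {f' : EuclideanSpace ℝ (Fin 3)} {t : ℝ}
    (hf : HasDerivAt f f' t) (i : Fin 3) : HasDerivAt (fun s => f s i) (f' i) t := by
  have := (EuclideanSpace.proj (𝕜 := ℝ) i).hasFDerivAt.comp_hasDerivAt t hf
  exact this

lemma norm_sq_eq3 (a : EuclideanSpace ℝ (Fin 3)) : ‖a‖^2 = a 0^2 + a 1^2 + a 2^2 := by
  rw [EuclideanSpace.norm_eq, Real.sq_sqrt (by positivity)]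
  simp [Fin.sum_univ_three, sq_abs]

lemma norm_hasDerivAt {p : ℝ → EuclideanSpace ℝ (Fin 3)} {p' : EuclideanSpace ℝ (Fin 3)} {t : ℝ}
    (hp : HasDerivAt p p' t) (h0 : p t ≠ 0) :
    HasDerivAt (fun s => ‖p s‖)
      ((p t 0 * p' 0 + p t 1 * p' 1 + p t 2 * p' 2) / ‖p t‖) t := by
  have h1 : ∀ i, HasDerivAt (fun s => p s i) (p' i) t := comp_hasDerivAt hp
  have h2 : HasDerivAt (fun s => (p s 0)^2 + (p s 1)^2 + (p s 2)^2)
      (2 * p t 0 * p' 0 + 2 * p t 1 * p' 1 + 2 * p t 2 * p' 2) t := by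
    have := (((h1 0).pow 2).add ((h1 1).pow 2)).add ((h1 2).pow 2)
    refine (this).congr_deriv (Eq.symm ?_)
    ring
  have hne : (p t 0)^2 + (p t 1)^2 + (p t 2)^2 ≠ 0 := by
    rw [← norm_sq_eq3]
    have := norm_pos_iff.mpr h0
    positivity
  have h3 := h2.sqrt hne
  have heq : (fun s => Real.sqrt ((p s 0)^2 + (p s 1)^2 + (p s 2)^2)) = fun s => ‖p s‖ := by
    funext s
    rw [EuclideanSpace.norm_eq]; simp [Fin.sum_univ_three, sq_abs]
  rw [heq] at h3
  refine (h3).congr_deriv (Eq.symm ?_)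
  have : Real.sqrt ((p t 0)^2 + (p t 1)^2 + (p t 2)^2) = ‖p t‖ := by
    rw [EuclideanSpace.norm_eq]; simp [Fin.sum_univ_three, sq_abs]
  rw [this]; ring

/-- For the non-commutative oscillator
`ẋ = θ (x × p)/|p|³ − (θ²/|p|⁴ + α/|p|³) p`, `ṗ = −x`,
the Hamiltonian `H = |x|²/2 + θ²/(2|p|²) + α/|p|`, the angular momentum
`J = x × p − θ p/|p|` and the Runge–Lenz vector `K = x × J − α p/|p|`
are all conserved. -/
theorem nc_oscillator_conserved (θ α : ℝ)
    (x p : ℝ → EuclideanSpace ℝ (Fin 3))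
    (hx : ContDiff ℝ (⊤ : ℕ∞) x) (hp : ContDiff ℝ (⊤ : ℕ∞) p) (hpne : ∀ t, p t ≠ 0)
    (hxeq : ∀ t, deriv x t = (θ / ‖p t‖ ^ 3) • cross3 (x t) (p t)
        - (θ ^ 2 / ‖p t‖ ^ 4 + α / ‖p t‖ ^ 3) • p t)
    (hpeq : ∀ t, deriv p t = -x t) :
    (∀ t s : ℝ,
        ‖x t‖ ^ 2 / 2 + θ ^ 2 / (2 * ‖p t‖ ^ 2) + α / ‖p t‖
          = ‖x s‖ ^ 2 / 2 + θ ^ 2 / (2 * ‖p s‖ ^ 2) + α / ‖p s‖) ∧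
    (∀ t s : ℝ,
        cross3 (x t) (p t) - (θ / ‖p t‖) • p t
          = cross3 (x s) (p s) - (θ / ‖p s‖) • p s) ∧
    (∀ t s : ℝ,
        cross3 (x t) (cross3 (x t) (p t) - (θ / ‖p t‖) • p t) - (α / ‖p t‖) • p t
          = cross3 (x s) (cross3 (x s) (p s) - (θ / ‖p s‖) • p s) - (α / ‖p s‖) • p s) := by
  have key : ∀ t : ℝ,
      HasDerivAt (fun w => ‖x w‖ ^ 2 / 2 + θ ^ 2 / (2 * ‖p w‖ ^ 2) + α / ‖p w‖) 0 t ∧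
      HasDerivAt (fun w => x w 1 * p w 2 - x w 2 * p w 1 - θ / ‖p w‖ * p w 0) 0 t ∧
      HasDerivAt (fun w => x w 2 * p w 0 - x w 0 * p w 2 - θ / ‖p w‖ * p w 1) 0 t ∧
      HasDerivAt (fun w => x w 0 * p w 1 - x w 1 * p w 0 - θ / ‖p w‖ * p w 2) 0 t ∧
      HasDerivAt (fun w => x w 1 * (x w 0 * p w 1 - x w 1 * p w 0 - θ / ‖p w‖ * p w 2)
          - x w 2 * (x w 2 * p w 0 - x w 0 * p w 2 - θ / ‖p w‖ * p w 1)
          - α / ‖p w‖ * p w 0) 0 t ∧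
      HasDerivAt (fun w => x w 2 * (x w 1 * p w 2 - x w 2 * p w 1 - θ / ‖p w‖ * p w 0)
          - x w 0 * (x w 0 * p w 1 - x w 1 * p w 0 - θ / ‖p w‖ * p w 2)
          - α / ‖p w‖ * p w 1) 0 t ∧
      HasDerivAt (fun w => x w 0 * (x w 2 * p w 0 - x w 0 * p w 2 - θ / ‖p w‖ * p w 1)
          - x w 1 * (x w 1 * p w 2 - x w 2 * p w 1 - θ / ‖p w‖ * p w 0)
          - α / ‖p w‖ * p w 2) 0 t := by
    intro t
    have hrpos : (0:ℝ) < ‖p t‖ := norm_pos_iff.mpr (hpne t)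
    have hrne : ‖p t‖ ≠ 0 := ne_of_gt hrpos
    have hr2 : ‖p t‖^2 = p t 0^2 + p t 1^2 + p t 2^2 := norm_sq_eq3 (p t)
    have hx't : HasDerivAt x (deriv x t) t := (hx.differentiable (by simp) t).hasDerivAt
    have hp't : HasDerivAt p (-x t) t := by
      have := (hp.differentiable (by simp) t).hasDerivAt
      rwa [hpeq t] at this
    have hxi : ∀ i, HasDerivAt (fun w => x w i) (deriv x t i) t := comp_hasDerivAt hx't
    have hpi : ∀ i : Fin 3, HasDerivAt (fun w => p w i) (-(x t i)) t := fun i =>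
      comp_hasDerivAt hp't i
    have hr' : HasDerivAt (fun w => ‖p w‖)
        ((p t 0 * -(x t 0) + p t 1 * -(x t 1) + p t 2 * -(x t 2)) / ‖p t‖) t :=
      norm_hasDerivAt hp't (hpne t)
    have hX' : ∀ i : Fin 3, deriv x t i
        = θ / ‖p t‖^3 * (cross3 (x t) (p t) i) - (θ^2/‖p t‖^4 + α/‖p t‖^3) * p t i := by
      intro i; rw [hxeq t]; rfl
    have c0 : cross3 (x t) (p t) 0 = x t 1 * p t 2 - x t 2 * p t 1 := rfl
    have c1 : cross3 (x t) (p t) 1 = x t 2 * p t 0 - x t 0 * p t 2 := rfl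
    have c2 : cross3 (x t) (p t) 2 = x t 0 * p t 1 - x t 1 * p t 0 := rfl
    have hth : HasDerivAt (fun w => θ / ‖p w‖)
        ((0 * ‖p t‖ - θ * ((p t 0 * -(x t 0) + p t 1 * -(x t 1) + p t 2 * -(x t 2)) / ‖p t‖))
          / ‖p t‖^2) t := (hasDerivAt_const t θ).div hr' hrne
    have hal : HasDerivAt (fun w => α / ‖p w‖)
        ((0 * ‖p t‖ - α * ((p t 0 * -(x t 0) + p t 1 * -(x t 1) + p t 2 * -(x t 2)) / ‖p t‖))
          / ‖p t‖^2) t := (hasDerivAt_const t α).div hr' hrne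
    refine ⟨?_, ?_, ?_, ?_, ?_, ?_, ?_⟩
    · have heqf : (fun w => ‖x w‖ ^ 2 / 2 + θ ^ 2 / (2 * ‖p w‖ ^ 2) + α / ‖p w‖)
          = fun w => (x w 0^2 + x w 1^2 + x w 2^2) / 2 + θ ^ 2 / (2 * ‖p w‖ ^ 2) + α / ‖p w‖ := by
        funext w; rw [norm_sq_eq3]
      rw [heqf]
      have h1 := ((((hxi 0).pow 2).add ((hxi 1).pow 2)).add ((hxi 2).pow 2)).div_const 2
      have h2 := (hasDerivAt_const t (θ^2)).div ((hr'.pow 2).const_mul 2)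
        (by positivity : 2 * ‖p t‖^2 ≠ 0)
      have h3 := (hasDerivAt_const t α).div hr' hrne
      refine ((h1.add h2).add h3).congr_deriv (Eq.symm ?_)
      rw [hX' 0, hX' 1, hX' 2, c0, c1, c2]
      simp only [Pi.mul_apply, Pi.sub_apply, Pi.pow_apply, Pi.add_apply, Pi.div_apply]
      field_simp
      ring
    · refine ((((hxi 1).mul (hpi 2)).sub ((hxi 2).mul (hpi 1))).sub (hth.mul (hpi 0))).congr_deriv (Eq.symm ?_)
      rw [hX' 1, hX' 2, c1, c2]
      field_simp
      linear_combination (-(‖p t‖ * x t 0 * θ)) * hr2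
    · refine ((((hxi 2).mul (hpi 0)).sub ((hxi 0).mul (hpi 2))).sub (hth.mul (hpi 1))).congr_deriv (Eq.symm ?_)
      rw [hX' 2, hX' 0, c2, c0]
      field_simp
      linear_combination (-(‖p t‖ * x t 1 * θ)) * hr2
    · refine ((((hxi 0).mul (hpi 1)).sub ((hxi 1).mul (hpi 0))).sub (hth.mul (hpi 2))).congr_deriv (Eq.symm ?_)
      rw [hX' 0, hX' 1, c0, c1]
      field_simp
      linear_combination (-(‖p t‖ * x t 2 * θ)) * hr2
    · refine ((((hxi 1).mul ((((hxi 0).mul (hpi 1)).sub ((hxi 1).mul (hpi 0))).sub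
          (hth.mul (hpi 2)))).sub
        ((hxi 2).mul ((((hxi 2).mul (hpi 0)).sub ((hxi 0).mul (hpi 2))).sub
          (hth.mul (hpi 1))))).sub (hal.mul (hpi 0))).congr_deriv (Eq.symm ?_)
      rw [hX' 0, hX' 1, hX' 2, c0, c1, c2]
      simp only [Pi.mul_apply, Pi.sub_apply, Pi.pow_apply, Pi.add_apply, Pi.div_apply]
      field_simp
      linear_combination (-(‖p t‖ ^ 2 * x t 0 * α)) * hr2
    · refine ((((hxi 2).mul ((((hxi 1).mul (hpi 2)).sub ((hxi 2).mul (hpi 1))).sub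
          (hth.mul (hpi 0)))).sub
        ((hxi 0).mul ((((hxi 0).mul (hpi 1)).sub ((hxi 1).mul (hpi 0))).sub
          (hth.mul (hpi 2))))).sub (hal.mul (hpi 1))).congr_deriv (Eq.symm ?_)
      rw [hX' 0, hX' 1, hX' 2, c0, c1, c2]
      simp only [Pi.mul_apply, Pi.sub_apply, Pi.pow_apply, Pi.add_apply, Pi.div_apply]
      field_simp
      linear_combination (-(‖p t‖ ^ 2 * x t 1 * α)) * hr2
    · refine ((((hxi 0).mul ((((hxi 2).mul (hpi 0)).sub ((hxi 0).mul (hpi 2))).sub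
          (hth.mul (hpi 1)))).sub
        ((hxi 1).mul ((((hxi 1).mul (hpi 2)).sub ((hxi 2).mul (hpi 1))).sub
          (hth.mul (hpi 0))))).sub (hal.mul (hpi 2))).congr_deriv (Eq.symm ?_)
      rw [hX' 0, hX' 1, hX' 2, c0, c1, c2]
      simp only [Pi.mul_apply, Pi.sub_apply, Pi.pow_apply, Pi.add_apply, Pi.div_apply]
      field_simp
      linear_combination (-(‖p t‖ ^ 2 * x t 2 * α)) * hr2
  have const_of : ∀ (f : ℝ → ℝ), (∀ t, HasDerivAt f 0 t) → ∀ u v : ℝ, f u = f v := by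
    intro f hf u v
    exact is_const_of_deriv_eq_zero (fun w => (hf w).differentiableAt)
      (fun w => (hf w).deriv) u v
  refine ⟨fun t s => const_of _ (fun w => (key w).1) t s, ?_, ?_⟩
  · intro t s
    ext i
    fin_cases i
    · exact const_of _ (fun w => (key w).2.1) t s
    · exact const_of _ (fun w => (key w).2.2.1) t s
    · exact const_of _ (fun w => (key w).2.2.2.1) t s
  · intro t s
    ext i
    fin_cases i
    · exact const_of _ (fun w => (key w).2.2.2.2.1) t s
    · exact const_of _ (fun w => (key w).2.2.2.2.2.1) t s
    · exact const_of _ (fun w => (key w).2.2.2.2.2.2) t s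
end

section
/- Let θ, α ∈ ℝ and let (x,p) solve ẋ = θ(x×p)/|p|³ − (θ²/|p|⁴ + α/|p|³)p, ṗ = −x, with p(t) ≠ 0. With the conserved J = x×p − θ p/|p| and K = x×J − α p/|p|, the vector N = α J − θ K satisfies, for all t: N · p(t) = θ(|J|² − θ²) and N · x(t) = 0. Consequently both the momentum trajectory p(t) and the position trajectory x(t) lie in fixed (affine resp. linear) planes orthogonal to N (when N ≠ 0). -/
set_option maxHeartbeats 2000000

/-- Angular momentum of the non-commutative oscillator. -/
noncomputable def Jnc (θ : ℝ) (x p : ℝ → EuclideanSpace ℝ (Fin 3)) (t : ℝ) :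
    EuclideanSpace ℝ (Fin 3) :=
  cross3 (x t) (p t) - (θ / ‖p t‖) • p t

/-- Runge–Lenz vector of the non-commutative oscillator. -/
noncomputable def Knc (θ α : ℝ) (x p : ℝ → EuclideanSpace ℝ (Fin 3)) (t : ℝ) :
    EuclideanSpace ℝ (Fin 3) :=
  cross3 (x t) (Jnc θ x p t) - (α / ‖p t‖) • p t

lemma nc_key (θ α : ℝ) (X0 X1 X2 P0 P1 P2 n : ℝ → ℝ) (t : ℝ) (nd : ℝ)
    (hn : n t ≠ 0)
    (hP0 : HasDerivAt P0 (-X0 t) t) (hP1 : HasDerivAt P1 (-X1 t) t)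
    (hP2 : HasDerivAt P2 (-X2 t) t)
    (hX0 : HasDerivAt X0
      (θ / n t ^ 3 * (X1 t * P2 t - X2 t * P1 t) - (θ ^ 2 / n t ^ 4 + α / n t ^ 3) * P0 t) t)
    (hX1 : HasDerivAt X1
      (θ / n t ^ 3 * (X2 t * P0 t - X0 t * P2 t) - (θ ^ 2 / n t ^ 4 + α / n t ^ 3) * P1 t) t)
    (hX2 : HasDerivAt X2
      (θ / n t ^ 3 * (X0 t * P1 t - X1 t * P0 t) - (θ ^ 2 / n t ^ 4 + α / n t ^ 3) * P2 t) t)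
    (hN : HasDerivAt n nd t)
    (hnd : nd = -(X0 t * P0 t + X1 t * P1 t + X2 t * P2 t) / n t) :
    HasDerivAt (fun s => α * (X1 s * P2 s - X2 s * P1 s - θ * (P0 s / n s))
      - θ * (X1 s * (X0 s * P1 s - X1 s * P0 s - θ * (P2 s / n s))
           - X2 s * (X2 s * P0 s - X0 s * P2 s - θ * (P1 s / n s))
           - α * (P0 s / n s))) 0 t := by
  subst hnd
  have d0 := hP0.div hN hn
  have d1 := hP1.div hN hn
  have d2 := hP2.div hN hn
  have hJ0 := ((hX1.mul hP2).sub (hX2.mul hP1)).sub (d0.const_mul θ)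
  have hJ1 := ((hX2.mul hP0).sub (hX0.mul hP2)).sub (d1.const_mul θ)
  have hJ2 := ((hX0.mul hP1).sub (hX1.mul hP0)).sub (d2.const_mul θ)
  have hK0 := ((hX1.mul hJ2).sub (hX2.mul hJ1)).sub (d0.const_mul α)
  have h := (hJ0.const_mul α).sub (hK0.const_mul θ)
  refine h.congr_deriv ?_
  simp only [Pi.mul_apply, Pi.sub_apply, Pi.div_apply]
  field_simp
  ring

/-- For the non-commutative oscillator, the vector `N = α J − θ K` is conserved
and satisfies `N·p = θ(|J|² − θ²)` and `N·x = 0`: momentum and position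
trajectories lie in fixed planes orthogonal to `N`. -/
theorem nc_oscillator_planes (θ α : ℝ)
    (x p : ℝ → EuclideanSpace ℝ (Fin 3))
    (hx : ContDiff ℝ (⊤ : ℕ∞) x) (hp : ContDiff ℝ (⊤ : ℕ∞) p) (hpne : ∀ t, p t ≠ 0)
    (hxeq : ∀ t, deriv x t = (θ / ‖p t‖ ^ 3) • cross3 (x t) (p t)
        - (θ ^ 2 / ‖p t‖ ^ 4 + α / ‖p t‖ ^ 3) • p t)
    (hpeq : ∀ t, deriv p t = -x t) :
    (∀ t s : ℝ, α • Jnc θ x p t - θ • Knc θ α x p t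
        = α • Jnc θ x p s - θ • Knc θ α x p s) ∧
    (∀ t : ℝ, (inner ℝ (α • Jnc θ x p t - θ • Knc θ α x p t) (p t) : ℝ)
        = θ * (‖Jnc θ x p t‖ ^ 2 - θ ^ 2)) ∧
    (∀ t : ℝ, (inner ℝ (α • Jnc θ x p t - θ • Knc θ α x p t) (x t) : ℝ) = 0) := by
  have hn : ∀ t, ‖p t‖ ≠ 0 := fun t => norm_ne_zero_iff.mpr (hpne t)
  have hnpos : ∀ t, (0:ℝ) < ‖p t‖ := fun t => norm_pos_iff.mpr (hpne t)
  -- norm as sqrt of components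
  have hq : ∀ t, ‖p t‖ = Real.sqrt (p t 0 ^ 2 + p t 1 ^ 2 + p t 2 ^ 2) := by
    intro t
    rw [EuclideanSpace.norm_eq]
    simp [Fin.sum_univ_three, Real.norm_eq_abs, sq_abs]
  have hn2 : ∀ t, ‖p t‖ ^ 2 = p t 0 ^ 2 + p t 1 ^ 2 + p t 2 ^ 2 := by
    intro t
    rw [hq t, Real.sq_sqrt (by positivity)]
  -- component derivatives of p
  have hPd : ∀ (i : Fin 3) (t : ℝ), HasDerivAt (fun s => p s i) (-(x t i)) t := by
    intro i t
    have h1 : HasDerivAt p (deriv p t) t := (hp.differentiable (by simp) t).hasDerivAt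
    rw [hpeq] at h1
    have h2 := (EuclideanSpace.proj i).hasFDerivAt.comp_hasDerivAt t h1
    simp at h2; exact h2
  -- component derivatives of x
  have hXd : ∀ (i : Fin 3) (t : ℝ), HasDerivAt (fun s => x s i)
      (θ / ‖p t‖ ^ 3 * cross3 (x t) (p t) i - (θ ^ 2 / ‖p t‖ ^ 4 + α / ‖p t‖ ^ 3) * p t i) t := by
    intro i t
    have h1 : HasDerivAt x (deriv x t) t := (hx.differentiable (by simp) t).hasDerivAt
    rw [hxeq] at h1
    have h2 := (EuclideanSpace.proj i).hasFDerivAt.comp_hasDerivAt t h1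
    simp [PiLp.sub_apply, PiLp.smul_apply, smul_eq_mul] at h2; exact h2
  -- derivative of the norm
  have hNd : ∀ t : ℝ, HasDerivAt (fun s => ‖p s‖)
      (-(x t 0 * p t 0 + x t 1 * p t 1 + x t 2 * p t 2) / ‖p t‖) t := by
    intro t
    have hqd : HasDerivAt (fun s => p s 0 ^ 2 + p s 1 ^ 2 + p s 2 ^ 2)
        ((2 : ℕ) * p t 0 ^ 1 * (-(x t 0)) + (2 : ℕ) * p t 1 ^ 1 * (-(x t 1))
          + (2 : ℕ) * p t 2 ^ 1 * (-(x t 2))) t :=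
      (((hPd 0 t).pow 2).add ((hPd 1 t).pow 2)).add ((hPd 2 t).pow 2)
    have hq0 : p t 0 ^ 2 + p t 1 ^ 2 + p t 2 ^ 2 ≠ 0 := by
      rw [← hn2 t]; exact pow_ne_zero 2 (hn t)
    have h3 := (Real.hasDerivAt_sqrt hq0).comp t hqd
    have hfun : (fun s => Real.sqrt (p s 0 ^ 2 + p s 1 ^ 2 + p s 2 ^ 2)) = fun s => ‖p s‖ := by
      funext s; rw [hq s]
    rw [show (Real.sqrt ∘ fun s => p s 0 ^ 2 + p s 1 ^ 2 + p s 2 ^ 2)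
        = fun s => ‖p s‖ from hfun] at h3
    refine h3.congr_deriv ?_
    rw [← hq t]
    field_simp [hn t]
    ring
  -- the three component functions of N are constant
  have hkey : ∀ (i : Fin 3), ∀ t : ℝ,
      HasDerivAt (fun s => α * (x s (i+1) * p s (i+2) - x s (i+2) * p s (i+1)
          - θ * (p s i / ‖p s‖))
        - θ * (x s (i+1) * (x s i * p s (i+1) - x s (i+1) * p s i - θ * (p s (i+2) / ‖p s‖))
             - x s (i+2) * (x s (i+2) * p s i - x s i * p s (i+2) - θ * (p s (i+1) / ‖p s‖))
             - α * (p s i / ‖p s‖))) 0 t := by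
    intro i t
    have h := nc_key θ α (fun s => x s i) (fun s => x s (i+1)) (fun s => x s (i+2))
      (fun s => p s i) (fun s => p s (i+1)) (fun s => p s (i+2)) (fun s => ‖p s‖) t
      (-(x t 0 * p t 0 + x t 1 * p t 1 + x t 2 * p t 2) / ‖p t‖)
      (hn t) (hPd i t) (hPd (i+1) t) (hPd (i+2) t)
      ?_ ?_ ?_ (hNd t) ?_
    · exact h
    · have := hXd i t
      fin_cases i <;>
        simpa [cross3_apply0, cross3_apply1, cross3_apply2] using this
    · have := hXd (i+1) t
      fin_cases i <;>
        simpa [cross3_apply0, cross3_apply1, cross3_apply2] using this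
    · have := hXd (i+2) t
      fin_cases i <;>
        simpa [cross3_apply0, cross3_apply1, cross3_apply2] using this
    · fin_cases i <;> simp <;> ring_nf
  have hconst : ∀ (i : Fin 3), ∀ t s : ℝ,
      (α * (x t (i+1) * p t (i+2) - x t (i+2) * p t (i+1) - θ * (p t i / ‖p t‖))
        - θ * (x t (i+1) * (x t i * p t (i+1) - x t (i+1) * p t i - θ * (p t (i+2) / ‖p t‖))
             - x t (i+2) * (x t (i+2) * p t i - x t i * p t (i+2) - θ * (p t (i+1) / ‖p t‖))
             - α * (p t i / ‖p t‖)))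
      = (α * (x s (i+1) * p s (i+2) - x s (i+2) * p s (i+1) - θ * (p s i / ‖p s‖))
        - θ * (x s (i+1) * (x s i * p s (i+1) - x s (i+1) * p s i - θ * (p s (i+2) / ‖p s‖))
             - x s (i+2) * (x s (i+2) * p s i - x s i * p s (i+2) - θ * (p s (i+1) / ‖p s‖))
             - α * (p s i / ‖p s‖))) := by
    intro i
    exact is_const_of_deriv_eq_zero
      (fun u => (hkey i u).differentiableAt)
      (fun u => (hkey i u).deriv)
  refine ⟨?_, ?_, ?_⟩
  · intro t s
    ext i
    fin_cases i
    · have h := hconst 0 t s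
      simp only [Fin.isValue, Fin.zero_eta, Fin.mk_one, Fin.reduceAdd, Fin.reduceFinMk,
        Jnc, Knc, PiLp.sub_apply, PiLp.smul_apply, smul_eq_mul,
        cross3_apply0, cross3_apply1, cross3_apply2] at h ⊢
      linear_combination h
    · have h := hconst 1 t s
      simp only [Fin.isValue, Fin.zero_eta, Fin.mk_one, Fin.reduceAdd, Fin.reduceFinMk,
        Jnc, Knc, PiLp.sub_apply, PiLp.smul_apply, smul_eq_mul,
        cross3_apply0, cross3_apply1, cross3_apply2] at h ⊢
      linear_combination h
    · have h := hconst 2 t s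
      simp only [Fin.isValue, Fin.zero_eta, Fin.mk_one, Fin.reduceAdd, Fin.reduceFinMk,
        Jnc, Knc, PiLp.sub_apply, PiLp.smul_apply, smul_eq_mul,
        cross3_apply0, cross3_apply1, cross3_apply2] at h ⊢
      linear_combination h
  · intro t
    rw [← real_inner_self_eq_norm_sq]
    simp only [Jnc, Knc, PiLp.inner_apply, RCLike.inner_apply, conj_trivial,
      Fin.sum_univ_three, PiLp.sub_apply, PiLp.smul_apply, smul_eq_mul,
      cross3_apply0, cross3_apply1, cross3_apply2]
    field_simp [hn t]
    linear_combination (θ ^ 3) * hn2 t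
  · intro t
    simp only [Jnc, Knc, PiLp.inner_apply, RCLike.inner_apply, conj_trivial,
      Fin.sum_univ_three, PiLp.sub_apply, PiLp.smul_apply, smul_eq_mul,
      cross3_apply0, cross3_apply1, cross3_apply2]
    field_simp [hn t]
    ring
end
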